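/- arXiv:1902.10012 — 2 statements merged into one kernel-verified Lean document; each statement's English description precedes it below -/
import Mathlib

section
/- Let π be a group, 𝔸 a normal subgroup of π, and (K_m)_{m≥1} the associated N-series (K_1 = π, K_2 = 𝔸 ⊔ Γ_2π, K_m = [K_{m−1}, K_1] ⊔ [K_{m−2}, K_2] for m ≥ 3). Let m ≥ 1 and let φ be an automorphism of π such that φ(x)x⁻¹ ∈ K_{2m+1} for every x ∈ π. Then φ(x)x⁻¹ ∈ Γ_{m+1}π for every x ∈ π. (This proves the inclusion J^𝔞_{2m}ℳ ⊆ J_mℳ between the alternative Johnson filtration and the Johnson filtration.) -/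
/-!
Every bracket in the recursion for `K_{n+3}` involves `K_{n+2}` or `K_{n+1}`, so the index drops by
at most two per commutator; hence `K_{n+1} ≤ Γ_{⌊n/2⌋+1}`, and in particular `K_{2m+1} ≤ Γ_{m+1}`.
-/

variable {π : Type*} [Group π]

/-- The series `(K_m)` associated to a (normal) subgroup `𝔸 = A` of `π`:
`K_1 = π`, `K_2 = 𝔸 ⊔ Γ₂π` and `K_m = [K_{m-1}, K_1] ⊔ [K_{m-2}, K_2]` for `m ≥ 3`.
Here `Γ_m π = lowerCentralSeries π (m-1)`.  The value at `0` is a junk value `⊤`. -/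
def altK (A : Subgroup π) : ℕ → Subgroup π
  | 0 => ⊤
  | 1 => ⊤
  | 2 => A ⊔ (⊤ : Subgroup π).lowerCentralSeries 1
  | (m + 3) => ⁅altK A (m + 2), altK A 1⁆ ⊔ ⁅altK A (m + 1), altK A 2⁆

theorem Subgroup.commutator_le_lowerCentralSeries_succ {S H K : Subgroup π} {k : ℕ}
    (hH : H ≤ S.lowerCentralSeries k) (hK : K ≤ S) :
    ⁅H, K⁆ ≤ S.lowerCentralSeries (k + 1) :=
  Subgroup.commutator_mono hH hK

theorem altK_le_lowerCentralSeries (A : Subgroup π) :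
    ∀ n : ℕ, altK A (n + 1) ≤ (⊤ : Subgroup π).lowerCentralSeries (n / 2)
  | 0 => le_top
  | 1 => le_top
  | n + 2 => by
    have hdiv : (n + 2) / 2 = n / 2 + 1 := by omega
    rw [hdiv, altK]
    refine sup_le ?_ ?_
    · calc ⁅altK A (n + 2), altK A 1⁆
          ≤ (⊤ : Subgroup π).lowerCentralSeries ((n + 1) / 2 + 1) :=
            Subgroup.commutator_le_lowerCentralSeries_succ (altK_le_lowerCentralSeries A (n + 1))
              le_top
        _ ≤ (⊤ : Subgroup π).lowerCentralSeries (n / 2 + 1) :=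
            Subgroup.lowerCentralSeries_antitone _ (by omega)
    · exact Subgroup.commutator_le_lowerCentralSeries_succ (altK_le_lowerCentralSeries A n) le_top

theorem stmt7_general (π : Type*) [Group π] (A : Subgroup π)
    (m : ℕ) (φ : π ≃* π)
    (hφ : ∀ x : π, φ x * x⁻¹ ∈ altK A (2 * m + 1)) :
    ∀ x : π, φ x * x⁻¹ ∈ (⊤ : Subgroup π).lowerCentralSeries m := by
  have hK : altK A (2 * m + 1) ≤ (⊤ : Subgroup π).lowerCentralSeries m := by
    simpa using altK_le_lowerCentralSeries A (2 * m)
  exact fun x => hK (hφ x)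

/-- If φ is an automorphism of π with φ(x)x⁻¹ ∈ K_{2m+1} for every x, then
φ(x)x⁻¹ ∈ Γ_{m+1}π for every x  (Γ_{m+1}π is lowerCentralSeries π m). -/
theorem stmt7 (π : Type*) [Group π] (A : Subgroup π) (hA : A.Normal)
    (m : ℕ) (hm : 1 ≤ m) (φ : π ≃* π)
    (hφ : ∀ x : π, φ x * x⁻¹ ∈ altK A (2 * m + 1)) :
    ∀ x : π, φ x * x⁻¹ ∈ (⊤ : Subgroup π).lowerCentralSeries m :=
  stmt7_general π A m φ hφ
end

section
/- Let π be the free group on 2g generators α_1, …, α_g, β_1, …, β_g (g ≥ 1), let 𝔸 be the normal closure in π of {α_1, …, α_g}, and let (K_m)_{m≥1} be the associated N-series (K_1 = π, K_2 = 𝔸 ⊔ Γ_2π, K_m = [K_{m−1}, K_1] ⊔ [K_{m−2}, K_2] for m ≥ 3). Let m ≥ 1 and let φ be an automorphism of π fixing the boundary word: φ(∏_{i=1}^g [β_i⁻¹, α_i]) = ∏_{i=1}^g [β_i⁻¹, α_i], where [x,y] = xyx⁻¹y⁻¹ and the product is taken in order of increasing i. Set δ_i := β_i⁻¹ φ(β_i)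 and γ_i := φ(α_i) α_i⁻¹, and assume that δ_i ∈ K_{m+1} and γ_i ∈ K_{m+2} for every i. Then ∏_{i=1}^g [β_i⁻¹, γ_i]·[δ_i⁻¹, α_i] ∈ K_{m+4}. (This is the key identity proving that the m-th alternative Johnson homomorphism takes values in symplectic derivations, i.e. Ξ_m τ^𝔞_m(h) = 0.) -/
variable {π : Type*} [Group π]

open scoped commutatorElement

/-- The free generators α_i of the free group on 2g generators. -/
def gen_α {g : ℕ} (i : Fin g) : FreeGroup (Fin g ⊕ Fin g) := FreeGroup.of (Sum.inl i)

/-- The free generators β_i of the free group on 2g generators. -/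
def gen_β {g : ℕ} (i : Fin g) : FreeGroup (Fin g ⊕ Fin g) := FreeGroup.of (Sum.inr i)

/-- 𝔸: the normal closure of the α_i in the free group on α_1,…,α_g,β_1,…,β_g. -/
def AA (g : ℕ) : Subgroup (FreeGroup (Fin g ⊕ Fin g)) :=
  Subgroup.normalClosure (Set.range fun i : Fin g => gen_α i)


/-!
Modulo `N = K_{m+4}` the filtration property `[K_a, K_b] ≤ K_{a+b}` makes `K_{m+3}` central and
makes `δ_i`, `γ_i` and `[β_i⁻¹, α_i] ∈ K_3` commute with each other. Expanding
`φ [β_i⁻¹, α_i] = [(β_i δ_i)⁻¹, γ_i α_i]` with the usual commutator identities then gives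
`φ [β_i⁻¹, α_i] ≡ ([β_i⁻¹, γ_i] [δ_i⁻¹, α_i]) · [β_i⁻¹, α_i]` with a central first factor.
Taking the product over `i`, the central factors split off, and since `φ` fixes the boundary word
their product is trivial modulo `N`.
-/

open QuotientGroup Subgroup

theorem QuotientGroup.commute_mk'_of_commutator_le {G : Type*} [Group G] {H K N : Subgroup G}
    [N.Normal] (hHK : ⁅H, K⁆ ≤ N) {x y : G} (hx : x ∈ H) (hy : y ∈ K) :
    Commute (mk' N x) (mk' N y) := by
  rw [← commutatorElement_eq_one_iff_commute, ← map_commutatorElement, mk'_apply, eq_one_iff]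
  exact hHK (commutator_mem_commutator hx hy)

namespace Subgroup

variable {G : Type*} [Group G]

theorem commutator_le_iff_map_mk'_eq_bot {H K N : Subgroup G} [N.Normal] :
    ⁅H, K⁆ ≤ N ↔ ⁅H.map (mk' N), K.map (mk' N)⁆ = ⊥ := by
  rw [← map_commutator, map_eq_bot_iff, ker_mk']

theorem commutator_commutator_le_of_rotate {H₁ H₂ H₃ N : Subgroup G} [N.Normal]
    (h1 : ⁅⁅H₂, H₃⁆, H₁⁆ ≤ N) (h2 : ⁅⁅H₃, H₁⁆, H₂⁆ ≤ N) : ⁅⁅H₁, H₂⁆, H₃⁆ ≤ N := by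
  rw [commutator_le_iff_map_mk'_eq_bot, map_commutator] at *
  exact commutator_commutator_eq_bot_of_rotate h1 h2

theorem commutator_sup_right_le {H K L N : Subgroup G} [N.Normal]
    (hK : ⁅H, K⁆ ≤ N) (hL : ⁅H, L⁆ ≤ N) : ⁅H, K ⊔ L⁆ ≤ N := by
  rw [commutator_le_iff_map_mk'_eq_bot, commutator_comm,
    commutator_eq_bot_iff_le_centralizer] at *
  rw [map_sup]
  exact sup_le hK hL

end Subgroup

theorem List.prod_ofFn_mul_of_commute {M : Type*} [Monoid M] {n : ℕ} (f g : Fin n → M)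
    (h : ∀ i j, Commute (g i) (f j)) :
    (List.ofFn fun i => f i * g i).prod = (List.ofFn f).prod * (List.ofFn g).prod := by
  induction n with
  | zero => simp
  | succ n ih =>
    have hcomm : Commute (g 0) (List.ofFn fun i => f i.succ).prod :=
      Commute.list_prod_right _ _ fun y hy => by
        obtain ⟨j, rfl⟩ := List.mem_ofFn.mp hy
        exact h 0 j.succ
    simp only [List.ofFn_succ, List.prod_cons]
    rw [ih _ _ fun i j => h i.succ j.succ, mul_assoc, ← mul_assoc (g 0), hcomm.eq]
    simp only [mul_assoc]

theorem commutatorElement_mul_inv_mul_mul_of_commute {G : Type*} [Group G] {a b c d : G}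
    (hca : Commute c ⁅b⁻¹, a⁆) (hdc : Commute d c) (hdw : Commute d ⁅b⁻¹, a⁆)
    (hbc : ⁅b⁻¹, c⁆ ∈ center G) (hda : ⁅d⁻¹, a⁆ ∈ center G) :
    ⁅(b * d)⁻¹, c * a⁆ = ⁅b⁻¹, c⁆ * ⁅d⁻¹, a⁆ * ⁅b⁻¹, a⁆ := by
  have hb : ⁅b⁻¹, c * a⁆ = ⁅b⁻¹, c⁆ * ⁅b⁻¹, a⁆ := by
    rw [commutatorElement_mul_right_eq_mul_conj, mul_assoc _ c, hca.eq, ← mul_assoc,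
      mul_inv_cancel_right]
  have hd : ⁅d⁻¹, c * a⁆ = ⁅d⁻¹, a⁆ := by
    rw [commutatorElement_mul_right_eq_mul_conj, hdc.inv_left.commutator_eq, one_mul,
      mem_center_iff.mp hda, mul_inv_cancel_right]
  have hconj : d⁻¹ * (⁅b⁻¹, c⁆ * ⁅b⁻¹, a⁆) * d⁻¹⁻¹ = ⁅b⁻¹, c⁆ * ⁅b⁻¹, a⁆ := by
    rw [← mul_assoc, mem_center_iff.mp hbc, mul_assoc, mul_assoc, inv_inv, ← mul_assoc d⁻¹,
      hdw.inv_left.eq, inv_mul_cancel_right]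
  rw [mul_inv_rev, commutatorElement_mul_left_eq_conj_mul, hb, hconj, hd, mul_assoc, mul_assoc,
    mem_center_iff.mp hda]

section Filtration

variable (A : Subgroup π)

theorem altK_zero : altK A 0 = ⊤ := by rw [altK]

theorem altK_one : altK A 1 = ⊤ := by rw [altK]

theorem altK_two : altK A 2 = A ⊔ (⊤ : Subgroup π).lowerCentralSeries 1 := by rw [altK]

theorem altK_add_three (n : ℕ) :
    altK A (n + 3) = ⁅altK A (n + 2), altK A 1⁆ ⊔ ⁅altK A (n + 1), altK A 2⁆ := by
  rw [altK.eq_def]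

theorem commutator_altK_one_le (a : ℕ) : ⁅altK A a, altK A 1⁆ ≤ altK A (a + 1) :=
  match a with
  | 0 => by
    rw [zero_add, altK_one]
    exact le_top
  | 1 => by
    rw [altK_one, altK_two, top_lowerCentralSeries_one]
    exact le_sup_right
  | a + 2 => by
    rw [altK_add_three]
    exact le_sup_left

theorem mem_altK_one (x : π) : x ∈ altK A 1 := by
  rw [altK_one]
  exact mem_top x

variable [A.Normal]

instance altK_normal : ∀ n, (altK A n).Normal
  | 0 => by rw [altK_zero]; infer_instance
  | 1 => by rw [altK_one]; infer_instance
  | 2 => by rw [altK_two]; infer_instance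
  | n + 3 => by
    have := altK_normal (n + 2)
    have := altK_normal (n + 1)
    have := altK_normal 1
    have := altK_normal 2
    rw [altK_add_three]
    infer_instance

theorem altK_succ_le (n : ℕ) : altK A (n + 1) ≤ altK A n :=
  match n with
  | 0 => by simp only [altK_zero, le_top]
  | 1 => by simp only [altK_one, le_top]
  | n + 2 => by
    rw [altK_add_three]
    refine sup_le (commutator_le_left _ _) ?_
    calc ⁅altK A (n + 1), altK A 2⁆ ≤ ⁅altK A (n + 1), altK A 1⁆ :=
          commutator_mono le_rfl (by simp only [altK_one, le_top])
      _ ≤ altK A (n + 2) := commutator_altK_one_le A (n + 1)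

theorem altK_antitone : Antitone (altK A) :=
  antitone_nat_of_succ_le (altK_succ_le A)

theorem commutator_altK_two_le (a : ℕ) : ⁅altK A a, altK A 2⁆ ≤ altK A (a + 2) :=
  match a with
  | 0 => by
    rw [zero_add]
    exact commutator_le_right _ _
  | a + 1 => by
    rw [show a + 1 + 2 = a + 3 from rfl, altK_add_three]
    exact le_sup_right

theorem commutator_altK_le (a b : ℕ) : ⁅altK A a, altK A b⁆ ≤ altK A (a + b) := by
  induction b using Nat.strong_induction_on generalizing a with
  | _ b ih =>
  match b, ih with
  | 0, _ =>
    calc ⁅altK A a, altK A 0⁆ = ⁅altK A a, altK A 1⁆ := by rw [altK_zero, altK_one]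
      _ ≤ altK A (a + 1) := commutator_altK_one_le A a
      _ ≤ altK A a := altK_succ_le A a
  | 1, _ => exact commutator_altK_one_le A a
  | 2, _ => exact commutator_altK_two_le A a
  | b + 3, ih =>
    rw [altK_add_three]
    refine commutator_sup_right_le ?_ ?_ <;> rw [commutator_comm] <;>
      refine commutator_commutator_le_of_rotate ?_ ?_
    · calc ⁅⁅altK A 1, altK A a⁆, altK A (b + 2)⁆
          ≤ ⁅altK A (a + 1), altK A (b + 2)⁆ :=
            commutator_mono ((commutator_comm _ _).trans_le (commutator_altK_one_le A a)) le_rfl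
        _ ≤ altK A (a + (b + 3)) := (ih _ (by omega) _).trans (altK_antitone A (by omega))
    · calc ⁅⁅altK A a, altK A (b + 2)⁆, altK A 1⁆
          ≤ ⁅altK A (a + (b + 2)), altK A 1⁆ := commutator_mono (ih _ (by omega) a) le_rfl
        _ ≤ altK A (a + (b + 3)) := commutator_altK_one_le A _
    · calc ⁅⁅altK A 2, altK A a⁆, altK A (b + 1)⁆
          ≤ ⁅altK A (a + 2), altK A (b + 1)⁆ :=
            commutator_mono ((commutator_comm _ _).trans_le (commutator_altK_two_le A a)) le_rfl
        _ ≤ altK A (a + (b + 3)) := (ih _ (by omega) _).trans (altK_antitone A (by omega))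
    · calc ⁅⁅altK A a, altK A (b + 1)⁆, altK A 2⁆
          ≤ ⁅altK A (a + (b + 1)), altK A 2⁆ := commutator_mono (ih _ (by omega) a) le_rfl
        _ ≤ altK A (a + (b + 3)) := commutator_altK_two_le A _

theorem commutatorElement_mem_altK {i j : ℕ} {x y : π} (hx : x ∈ altK A i) (hy : y ∈ altK A j) :
    ⁅x, y⁆ ∈ altK A (i + j) :=
  commutator_altK_le A i j (commutator_mem_commutator hx hy)

end Filtration

section Quotient

variable (A : Subgroup π) [A.Normal]

theorem commute_mk'_altK {i j n : ℕ} (hn : n ≤ i + j) {x y : π} (hx : x ∈ altK A i)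
    (hy : y ∈ altK A j) : Commute (mk' (altK A n) x) (mk' (altK A n) y) :=
  commute_mk'_of_commutator_le ((commutator_altK_le A i j).trans (altK_antitone A hn)) hx hy

theorem mk'_altK_mem_center {i n : ℕ} (hn : n ≤ i + 1) {x : π} (hx : x ∈ altK A i) :
    mk' (altK A n) x ∈ center (π ⧸ altK A n) := by
  rw [mem_center_iff]
  intro q
  obtain ⟨y, rfl⟩ := mk'_surjective _ q
  exact (commute_mk'_altK A hn hx (mem_altK_one A y)).symm.eq

theorem mk'_altK_commutatorElement_mul_inv_mul_mul {m : ℕ} (hm : 1 ≤ m) {a b c d : π}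
    (ha : a ∈ altK A 2) (hc : c ∈ altK A (m + 2)) (hd : d ∈ altK A (m + 1)) :
    mk' (altK A (m + 4)) ⁅(b * d)⁻¹, c * a⁆ =
      mk' (altK A (m + 4)) (⁅b⁻¹, c⁆ * ⁅d⁻¹, a⁆) * mk' (altK A (m + 4)) ⁅b⁻¹, a⁆ := by
  have hb := mem_altK_one A b⁻¹
  have hw : ⁅b⁻¹, a⁆ ∈ altK A (1 + 2) := commutatorElement_mem_altK A hb ha
  have hca := commute_mk'_altK A (n := m + 4) (by omega) hc hw
  have hdc := commute_mk'_altK A (n := m + 4) (by omega) hd hc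
  have hdw := commute_mk'_altK A (n := m + 4) (by omega) hd hw
  have hbc := mk'_altK_mem_center A (n := m + 4) (by omega) (commutatorElement_mem_altK A hb hc)
  have hda := mk'_altK_mem_center A (n := m + 4) (by omega)
    (commutatorElement_mem_altK A (inv_mem hd) ha)
  simp only [map_mul, map_inv, map_commutatorElement] at hca hdw hbc hda ⊢
  exact commutatorElement_mul_inv_mul_mul_of_commute hca hdc hdw hbc hda

end Quotient

instance (g : ℕ) : (AA g).Normal := normalClosure_normal

theorem gen_α_mem_altK_two {g : ℕ} (i : Fin g) : gen_α i ∈ altK (AA g) 2 := by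
  rw [altK_two]
  exact mem_sup_left (subset_normalClosure (Set.mem_range_self i))

theorem stmt10_general (g m : ℕ) (hm : 1 ≤ m)
    (φ : FreeGroup (Fin g ⊕ Fin g) ≃* FreeGroup (Fin g ⊕ Fin g))
    (hφ : φ ((List.ofFn fun i : Fin g => ⁅(gen_β i)⁻¹, gen_α i⁆).prod)
        = (List.ofFn fun i : Fin g => ⁅(gen_β i)⁻¹, gen_α i⁆).prod)
    (hδ : ∀ i : Fin g, (gen_β i)⁻¹ * φ (gen_β i) ∈ altK (AA g) (m + 1))
    (hγ : ∀ i : Fin g, φ (gen_α i) * (gen_α i)⁻¹ ∈ altK (AA g) (m + 2)) :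
    (List.ofFn fun i : Fin g =>
        ⁅(gen_β i)⁻¹, φ (gen_α i) * (gen_α i)⁻¹⁆ *
        ⁅((gen_β i)⁻¹ * φ (gen_β i))⁻¹, gen_α i⁆).prod ∈ altK (AA g) (m + 4) := by
  set f := mk' (altK (AA g) (m + 4))
  set w := fun i : Fin g => ⁅(gen_β i)⁻¹, gen_α i⁆
  set x := fun i : Fin g => ⁅(gen_β i)⁻¹, φ (gen_α i) * (gen_α i)⁻¹⁆ *
    ⁅((gen_β i)⁻¹ * φ (gen_β i))⁻¹, gen_α i⁆
  have hx (i : Fin g) : f (x i) ∈ center _ := by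
    refine mk'_altK_mem_center _ (i := m + 3) le_rfl (mul_mem ?_ ?_)
    · exact altK_antitone _ (by omega)
        (commutatorElement_mem_altK _ (mem_altK_one _ _) (hγ i))
    · exact commutatorElement_mem_altK _ (i := m + 1) (inv_mem (hδ i)) (gen_α_mem_altK_two i)
  have hφw (i : Fin g) : f (φ (w i)) = f (x i) * f (w i) := by
    have hφw_eq : φ (w i) = ⁅(gen_β i * ((gen_β i)⁻¹ * φ (gen_β i)))⁻¹,
        (φ (gen_α i) * (gen_α i)⁻¹) * gen_α i⁆ := by
      rw [map_commutatorElement, map_inv, mul_inv_cancel_left, inv_mul_cancel_right]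
    rw [hφw_eq]
    exact mk'_altK_commutatorElement_mul_inv_mul_mul _ hm (gen_α_mem_altK_two i) (hγ i) (hδ i)
  have hprod : f (List.ofFn w).prod = f (List.ofFn x).prod * f (List.ofFn w).prod :=
    calc f (List.ofFn w).prod = (List.ofFn fun i => f (x i) * f (w i)).prod := by
          rw [← hφ, map_list_prod, map_list_prod, List.map_ofFn, List.map_ofFn]
          simp only [Function.comp_def, hφw]
      _ = f (List.ofFn x).prod * f (List.ofFn w).prod := by
          rw [List.prod_ofFn_mul_of_commute _ _ fun i j => mem_center_iff.mp (hx j) _,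
            map_list_prod, map_list_prod, List.map_ofFn, List.map_ofFn]
          rfl
  rw [← ker_mk' (altK (AA g) (m + 4)), MonoidHom.mem_ker]
  exact right_eq_mul.mp hprod

/-- If φ fixes the boundary word ∏ [β_i⁻¹, α_i], and δ_i = β_i⁻¹ φ(β_i) ∈ K_{m+1},
γ_i = φ(α_i) α_i⁻¹ ∈ K_{m+2}, then ∏ [β_i⁻¹, γ_i]·[δ_i⁻¹, α_i] ∈ K_{m+4}. -/
theorem stmt10 (g m : ℕ) (hg : 1 ≤ g) (hm : 1 ≤ m)
    (φ : FreeGroup (Fin g ⊕ Fin g) ≃* FreeGroup (Fin g ⊕ Fin g))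
    (hφ : φ ((List.ofFn fun i : Fin g => ⁅(gen_β i)⁻¹, gen_α i⁆).prod)
        = (List.ofFn fun i : Fin g => ⁅(gen_β i)⁻¹, gen_α i⁆).prod)
    (hδ : ∀ i : Fin g, (gen_β i)⁻¹ * φ (gen_β i) ∈ altK (AA g) (m + 1))
    (hγ : ∀ i : Fin g, φ (gen_α i) * (gen_α i)⁻¹ ∈ altK (AA g) (m + 2)) :
    (List.ofFn fun i : Fin g =>
        ⁅(gen_β i)⁻¹, φ (gen_α i) * (gen_α i)⁻¹⁆ *
        ⁅((gen_β i)⁻¹ * φ (gen_β i))⁻¹, gen_α i⁆).prod ∈ altK (AA g) (m + 4) :=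
  stmt10_general g m hm φ hφ hδ hγ
end
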